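/- For ρ(p) = p·𝟙_{N+1}/(N+1) + (1−p)|GHZ_N⟩⟨GHZ_N| on the symmetric N-qubit space and any bipartition k | N−k (1 ≤ k ≤ ⌊N/2⌋), the vector (|D_k^(0)⟩|D_{N−k}^(N−k)⟩ + |D_k^(k)⟩|D_{N−k}^(0)⟩)/√2 is an eigenvector of ρ(p)^{T_A} with eigenvalue p/[(N+1)C(N,k)] − (1−p)/2. In particular ρ(p) is NPT (has negative partial transpose) whenever p < p_min = 1/(1 + 2/[(N+1)C(N,⌊N/2⌋)]). -/
import Mathlib


open Matrix

/-- The partial transpose of the maximally mixed symmetric `N`-qubit state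
`𝟙_{N+1}/(N+1)` on `H^{∨k} ⊗ H^{∨(N−k)}` in the product Dicke basis
(via the `χ`-coefficient formula). -/
noncomputable def rho0TA (N k : ℕ) :
    Matrix (Fin (k+1) × Fin (N-k+1)) (Fin (k+1) × Fin (N-k+1)) ℝ :=
  fun p q =>
    if ((p.1 : ℕ) + (q.2 : ℕ)) = ((q.1 : ℕ) + (p.2 : ℕ)) then
      (1 / (N + 1)) *
        Real.sqrt ((k.choose q.1 * (N - k).choose p.2 : ℝ) /
          (N.choose ((p.1 : ℕ) + (q.2 : ℕ)))) *
        Real.sqrt ((k.choose p.1 * (N - k).choose q.2 : ℝ) /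
          (N.choose ((p.1 : ℕ) + (q.2 : ℕ))))
    else 0

/-- The GHZ state `|GHZ_N⟩ = (|D_N^(0)⟩ − |D_N^(N)⟩)/√2` as a vector of
`H^{∨k} ⊗ H^{∨(N−k)}`: `|D_N^(0)⟩ = |D_k^(0)⟩|D_{N−k}^(0)⟩` and
`|D_N^(N)⟩ = |D_k^(k)⟩|D_{N−k}^(N−k)⟩`. -/
noncomputable def ghzVec (N k : ℕ) : Fin (k+1) × Fin (N-k+1) → ℝ :=
  fun q =>
    (if q = ((0 : Fin (k+1)), (0 : Fin (N-k+1))) then (Real.sqrt 2)⁻¹ else 0) -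
    (if q = (Fin.last k, Fin.last (N-k)) then (Real.sqrt 2)⁻¹ else 0)

/-- The partial transpose of `|GHZ_N⟩⟨GHZ_N|` on the `k`-qubit factor. -/
noncomputable def ghzTA (N k : ℕ) :
    Matrix (Fin (k+1) × Fin (N-k+1)) (Fin (k+1) × Fin (N-k+1)) ℝ :=
  fun p q => ghzVec N k (q.1, p.2) * ghzVec N k (p.1, q.2)

/-- The partial transpose of
`ρ(p) = p 𝟙_{N+1}/(N+1) + (1−p)|GHZ_N⟩⟨GHZ_N|`. -/
noncomputable def rhoTA (N k : ℕ) (p : ℝ) :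
    Matrix (Fin (k+1) × Fin (N-k+1)) (Fin (k+1) × Fin (N-k+1)) ℝ :=
  p • rho0TA N k + (1 - p) • ghzTA N k

/-- The vector `(|D_k^(0)⟩|D_{N−k}^(N−k)⟩ + |D_k^(k)⟩|D_{N−k}^(0)⟩)/√2`. -/
noncomputable def vGHZ (N k : ℕ) : Fin (k+1) × Fin (N-k+1) → ℝ :=
  fun q =>
    (if q = ((0 : Fin (k+1)), Fin.last (N-k)) then (Real.sqrt 2)⁻¹ else 0) +
    (if q = (Fin.last k, (0 : Fin (N-k+1))) then (Real.sqrt 2)⁻¹ else 0)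

lemma mulVec_vGHZ {N k : ℕ}
    (M : Matrix (Fin (k+1) × Fin (N-k+1)) (Fin (k+1) × Fin (N-k+1)) ℝ)
    (x : Fin (k+1) × Fin (N-k+1)) :
    M.mulVec (vGHZ N k) x =
      M x ((0 : Fin (k+1)), Fin.last (N-k)) * (Real.sqrt 2)⁻¹ +
      M x (Fin.last k, (0 : Fin (N-k+1))) * (Real.sqrt 2)⁻¹ := by
  simp [Matrix.mulVec, dotProduct, vGHZ, mul_add, mul_ite, mul_zero,
    Finset.sum_add_distrib, Finset.sum_ite_eq']

lemma rho0_col_a {N k : ℕ} (hkN : k < N) (x : Fin (k+1) × Fin (N-k+1)) :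
    rho0TA N k x ((0 : Fin (k+1)), Fin.last (N-k)) =
      if x = ((0 : Fin (k+1)), Fin.last (N-k)) then 1/(((N:ℝ)+1) * N.choose k) else 0 := by
  obtain ⟨i, j⟩ := x
  have hC : (0:ℝ) < N.choose k := by exact_mod_cast Nat.choose_pos hkN.le
  by_cases h : (i, j) = ((0 : Fin (k+1)), Fin.last (N-k))
  · have hi : i = 0 := congrArg Prod.fst h
    have hj : j = Fin.last (N-k) := congrArg Prod.snd h
    subst hi; subst hj
    rw [if_pos rfl]
    simp only [rho0TA, Fin.val_zero, Fin.val_last, zero_add, if_pos rfl,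
      Nat.choose_self, Nat.choose_zero_right, Nat.cast_one, one_mul,
      Nat.choose_symm hkN.le]
    rw [mul_assoc, Real.mul_self_sqrt (by positivity), div_mul_div_comm, one_mul, if_true]
  · rw [if_neg h]
    simp only [rho0TA]
    rw [if_neg]
    intro hc
    simp only [Fin.val_zero, Fin.val_last, zero_add] at hc
    have hj := j.isLt
    apply h
    have hi0 : (i:ℕ) = 0 := by omega
    have hjv : (j:ℕ) = N - k := by omega
    exact Prod.ext (Fin.ext hi0) (Fin.ext (by simpa [Fin.val_last] using hjv))

lemma rho0_col_b {N k : ℕ} (hkN : k < N) (x : Fin (k+1) × Fin (N-k+1)) :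
    rho0TA N k x (Fin.last k, (0 : Fin (N-k+1))) =
      if x = (Fin.last k, (0 : Fin (N-k+1))) then 1/(((N:ℝ)+1) * N.choose k) else 0 := by
  obtain ⟨i, j⟩ := x
  have hC : (0:ℝ) < N.choose k := by exact_mod_cast Nat.choose_pos hkN.le
  by_cases h : (i, j) = (Fin.last k, (0 : Fin (N-k+1)))
  · have hi : i = Fin.last k := congrArg Prod.fst h
    have hj : j = 0 := congrArg Prod.snd h
    subst hi; subst hj
    rw [if_pos rfl]
    simp only [rho0TA, Fin.val_zero, Fin.val_last, add_zero, if_pos rfl,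
      Nat.choose_self, Nat.choose_zero_right, Nat.cast_one, one_mul, mul_one]
    rw [mul_assoc, Real.mul_self_sqrt (by positivity), div_mul_div_comm, one_mul, if_true]
  · rw [if_neg h]
    simp only [rho0TA]
    rw [if_neg]
    intro hc
    simp only [Fin.val_zero, Fin.val_last, add_zero] at hc
    have hi := i.isLt
    apply h
    have hiv : (i:ℕ) = k := by omega
    have hjv : (j:ℕ) = 0 := by omega
    exact Prod.ext (Fin.ext (by simpa [Fin.val_last] using hiv)) (Fin.ext hjv)

lemma ghz_col_a {N k : ℕ} (hk1 : 1 ≤ k) (hkN : k < N) (x : Fin (k+1) × Fin (N-k+1)) :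
    ghzTA N k x ((0 : Fin (k+1)), Fin.last (N-k)) =
      if x = (Fin.last k, (0 : Fin (N-k+1))) then -(1/2 : ℝ) else 0 := by
  obtain ⟨i, j⟩ := x
  have h1 : (0 : Fin (k+1)) ≠ Fin.last k := by
    intro h; have := congrArg Fin.val h; simp [Fin.val_last] at this; omega
  have h2 : Fin.last (N-k) ≠ (0 : Fin (N-k+1)) := by
    intro h; have := congrArg Fin.val h; simp [Fin.val_last] at this; omega
  simp only [ghzTA, ghzVec, Prod.mk.injEq]
  by_cases hj : j = (0 : Fin (N-k+1)) <;> by_cases hi : i = Fin.last k <;>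
    simp [hi, hj, h1, h2, h1.symm, h2.symm, ← mul_inv, Real.mul_self_sqrt]

lemma ghz_col_b {N k : ℕ} (hk1 : 1 ≤ k) (hkN : k < N) (x : Fin (k+1) × Fin (N-k+1)) :
    ghzTA N k x (Fin.last k, (0 : Fin (N-k+1))) =
      if x = ((0 : Fin (k+1)), Fin.last (N-k)) then -(1/2 : ℝ) else 0 := by
  obtain ⟨i, j⟩ := x
  have h1 : (0 : Fin (k+1)) ≠ Fin.last k := by
    intro h; have := congrArg Fin.val h; simp [Fin.val_last] at this; omega
  have h2 : Fin.last (N-k) ≠ (0 : Fin (N-k+1)) := by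
    intro h; have := congrArg Fin.val h; simp [Fin.val_last] at this; omega
  simp only [ghzTA, ghzVec, Prod.mk.injEq]
  by_cases hj : j = Fin.last (N-k) <;> by_cases hi : i = (0 : Fin (k+1)) <;>
    simp [hi, hj, h1, h2, h1.symm, h2.symm, ← mul_inv, Real.mul_self_sqrt]

lemma eig {N k : ℕ} (hk1 : 1 ≤ k) (hkN : k < N) (p : ℝ) :
    (rhoTA N k p).mulVec (vGHZ N k) =
      (p / ((N + 1) * N.choose k) - (1 - p) / 2) • vGHZ N k := by
  have hC : (0:ℝ) < N.choose k := by exact_mod_cast Nat.choose_pos hkN.le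
  funext x
  rw [mulVec_vGHZ]
  simp only [rhoTA, Matrix.add_apply, Matrix.smul_apply, smul_eq_mul,
    rho0_col_a hkN, rho0_col_b hkN, ghz_col_a hk1 hkN, ghz_col_b hk1 hkN,
    vGHZ, Pi.smul_apply, smul_eq_mul]
  have hab : ((0 : Fin (k+1)), Fin.last (N-k)) ≠ (Fin.last k, (0 : Fin (N-k+1))) := by
    intro h
    have := congrArg (fun q => (Prod.fst q : Fin (k+1)).val) h
    simp [Fin.val_last] at this; omega
  by_cases hA : x = ((0 : Fin (k+1)), Fin.last (N-k)) <;>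
    by_cases hB : x = (Fin.last k, (0 : Fin (N-k+1)))
  · exact absurd (hA ▸ hB) hab
  · simp only [hA, if_pos rfl, if_neg hab, if_neg hab.symm]
    push_cast
    ring
  · simp only [hB, if_pos rfl, if_neg hab, if_neg hab.symm]
    push_cast
    ring
  · simp only [if_neg hA, if_neg hB]
    ring

/-- for any bipartition `k | N−k` with `1 ≤ k ≤ ⌊N/2⌋`, the
vector `(|D_k^(0)⟩|D_{N−k}^(N−k)⟩ + |D_k^(k)⟩|D_{N−k}^(0)⟩)/√2` is an
eigenvector of `ρ(p)^{T_A}` with eigenvalue `p/[(N+1)C(N,k)] − (1−p)/2`;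
in particular, for `N ≥ 2`, `ρ(p)` is NPT (its partial transpose over the
bipartition `⌊N/2⌋ | N − ⌊N/2⌋` has a negative eigenvalue) whenever
`p < p_min = 1/(1 + 2/[(N+1) C(N,⌊N/2⌋)])`. -/
theorem ghz_mixture_NPT (N k : ℕ) (hk1 : 1 ≤ k) (hk : k ≤ N / 2) (p : ℝ) :
    (rhoTA N k p).mulVec (vGHZ N k) =
      (p / ((N + 1) * N.choose k) - (1 - p) / 2) • vGHZ N k ∧
    (2 ≤ N → p < 1 / (1 + 2 / ((N + 1) * (N.choose (N / 2)) : ℝ)) →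
      ∃ μ : ℝ, μ < 0 ∧ ∃ w : Fin (N/2+1) × Fin (N-N/2+1) → ℝ,
        w ≠ 0 ∧ (rhoTA N (N / 2) p).mulVec w = μ • w) := by
  have hN2 : 2 ≤ N := by omega
  have hkN : k < N := lt_of_le_of_lt hk (Nat.div_lt_self (by omega) one_lt_two)
  refine ⟨eig hk1 hkN p, fun _ hp => ?_⟩
  have hk1' : 1 ≤ N / 2 := by omega
  have hkN' : N / 2 < N := Nat.div_lt_self (by omega) one_lt_two
  have hCpos : (0:ℝ) < N.choose (N/2) := by exact_mod_cast Nat.choose_pos hkN'.le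
  refine ⟨p / ((N + 1) * N.choose (N/2)) - (1 - p) / 2, ?_, vGHZ N (N/2), ?_, eig hk1' hkN' p⟩
  · set c : ℝ := ((N:ℝ) + 1) * N.choose (N/2) with hc
    have hcpos : 0 < c := by positivity
    have h2 : (0:ℝ) < c + 2 := by linarith
    have e : 1 / (1 + 2 / c) = c / (c + 2) := by
      field_simp
    rw [e] at hp
    have hp' : p * (c + 2) < c := (lt_div_iff₀ h2).mp hp
    have : p / c < (1 - p) / 2 := by
      rw [div_lt_div_iff₀ hcpos two_pos]; nlinarith
    linarith
  · intro h0
    have hne : ((0 : Fin (N/2+1)), Fin.last (N - N/2)) ≠ (Fin.last (N/2), (0 : Fin (N - N/2+1))) := by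
      intro h
      have := congrArg (fun q => (Prod.fst q : Fin (N/2+1)).val) h
      simp [Fin.val_last] at this; omega
    have := congrFun h0 ((0 : Fin (N/2+1)), Fin.last (N - N/2))
    simp only [vGHZ, if_pos rfl, if_neg hne, add_zero, Pi.zero_apply] at this
    have : Real.sqrt 2 ≠ 0 := by positivity
    simp_all
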